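/- Let Γ = (C, A, Δ) be a normed BPA system and R ⊆ C_G. If γ ≃_R δ, then Rd_R(γ) = Rd_R(δ). -/

import Mathlib

open Relation

/-- A BPA system over constants `C` and actions `A`: a distinguished silent
action `tau`, and a finite set of transition rules `X —ℓ→ α`, where `C` and
`A` are finite. -/
structure BPA (C A : Type) where
  tau : A
  rules : Set (C × A × List C)
  finC : Finite C
  finA : Finite A
  finRules : rules.Finite

namespace BPA

variable {C A : Type}

/-- One-step labelled transition between processes.  Processes are strings
over `C` (lists, with the leftmost constant acting first). -/
def Step (Γ : BPA C A) (ℓ : A) (p q : List C) : Prop :=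
  ∃ X γ β, (X, ℓ, γ) ∈ Γ.rules ∧ p = X :: β ∧ q = γ ++ β

/-- A transition carrying an arbitrary label. -/
def AnyStep (Γ : BPA C A) (p q : List C) : Prop := ∃ ℓ, Γ.Step ℓ p q

/-- `⟹` : the reflexive transitive closure of silent steps. -/
def TauStar (Γ : BPA C A) : List C → List C → Prop := ReflTransGen (Γ.Step Γ.tau)

/-- A process is normed if it can reach the empty process `ε`. -/
def NormedProc (Γ : BPA C A) (p : List C) : Prop := ReflTransGen Γ.AnyStep p []

/-- The BPA system is normed. -/
def Normed (Γ : BPA C A) : Prop := ∀ X : C, Γ.NormedProc [X]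

/-- A chain of `s`-steps starting at `start` in which every visited state is
related by `r` to the process `anchor`. -/
def RelChain (s : List C → List C → Prop) (r : List C → List C → Prop)
    (anchor : List C) : List C → List C → Prop :=
  ReflTransGen fun x y => s x y ∧ r anchor y

/-- Branching bisimulation (an equivalence relation by convention). -/
def IsBranchingBisim (Γ : BPA C A) (r : List C → List C → Prop) : Prop :=
  Equivalence r ∧ ∀ α β, r α β →
    ((∀ a, a ≠ Γ.tau → ∀ α', Γ.Step a α α' →
        ∃ β'' β', RelChain (Γ.Step Γ.tau) r β β β'' ∧ Γ.Step a β'' β' ∧ r α' β') ∧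
     (∀ α', Γ.Step Γ.tau α α' → ¬ r α α' →
        ∃ β'' β', RelChain (Γ.Step Γ.tau) r β β β'' ∧ Γ.Step Γ.tau β'' β' ∧
          ¬ r β'' β' ∧ r α' β'))

/-- Branching bisimilarity `≃` : the largest branching bisimulation. -/
def Bisim (Γ : BPA C A) (α β : List C) : Prop :=
  ∃ r, Γ.IsBranchingBisim r ∧ r α β

/-- A ground process: it can silently reach `ε`. -/
def Ground (Γ : BPA C A) (p : List C) : Prop := Γ.TauStar p []

/-- The set `C_G` of ground constants. -/
def GroundC (Γ : BPA C A) : Set C := {X | Γ.Ground [X]}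

/-- `R`-equality `=_R`: the two processes differ only in suffixes over `R`. -/
def REq (R : Set C) (α β : List C) : Prop :=
  ∃ ζ a b, α = ζ ++ a ∧ β = ζ ++ b ∧ (∀ X ∈ a, X ∈ R) ∧ (∀ X ∈ b, X ∈ R)

open Classical in
/-- The `R`-normal form `α_R` of a process: delete the maximal suffix over `R`. -/
noncomputable def nf (R : Set C) (α : List C) : List C :=
  (α.reverse.dropWhile fun X => decide (X ∈ R)).reverse

/-- A process is in `R`-normal form. -/
def InNF (R : Set C) (α : List C) : Prop := nf R α = α

/-- The `R`-transition relation `—ℓ→_R` between `R`-normal forms. -/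
def StepR (Γ : BPA C A) (R : Set C) (ℓ : A) (ζ η : List C) : Prop :=
  ∃ α β, ζ = nf R α ∧ η = nf R β ∧ Γ.Step ℓ α β

/-- `⟹_R`. -/
def TauStarR (Γ : BPA C A) (R : Set C) : List C → List C → Prop :=
  ReflTransGen (Γ.StepR R Γ.tau)

/-- `R`-bisimulation: an equivalence relation containing `=_R` satisfying
ground preservation and the relativized branching transfer conditions. -/
def IsRBisim (Γ : BPA C A) (R : Set C) (r : List C → List C → Prop) : Prop :=
  Equivalence r ∧ (∀ α β, REq R α β → r α β) ∧
  ∀ α β, r α β →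
    ((Γ.TauStar α [] → Γ.TauStar β []) ∧
     (∀ α', Γ.Step Γ.tau α α' → ¬ r α α' →
        ∃ β'' β', RelChain (Γ.StepR R Γ.tau) r β (nf R β) β'' ∧
          Γ.StepR R Γ.tau β'' β' ∧ ¬ r β'' β' ∧ r α' β') ∧
     (∀ a, a ≠ Γ.tau → ∀ α', Γ.Step a α α' →
        ∃ β'' β', RelChain (Γ.StepR R Γ.tau) r β (nf R β) β'' ∧
          Γ.StepR R a β'' β' ∧ r α' β'))

/-- `R`-bisimilarity `≃_R` : the largest `R`-bisimulation. -/
def RBisim (Γ : BPA C A) (R : Set C) (α β : List C) : Prop :=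
  ∃ r, Γ.IsRBisim R r ∧ r α β

/-- `Id_R = {X ∈ C : X ≃_R ε}`. -/
def IdR (Γ : BPA C A) (R : Set C) : Set C := {X | Γ.RBisim R [X] []}

/-- `Rd_R(γ) = {X ∈ C : Xγ ≃_R γ}`. -/
def RdR (Γ : BPA C A) (R : Set C) (γ : List C) : Set C :=
  {X | Γ.RBisim R (X :: γ) γ}

/-- An admissible reference set: `R = Id_R`. -/
def Admissible (Γ : BPA C A) (R : Set C) : Prop := R = Γ.IdR R

end BPA

/-!
The theorem follows from two properties of `≃_R`: it is transitive, and it is a congruence for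
prefixing, `p γ ≃_R p δ` whenever `γ ≃_R δ`; then `X δ ≃_R X γ ≃_R γ ≃_R δ`.

Both come from one construction: for `R`-normal forms `ξ₁ ≃_R ξ₂`, the equivalence closure of
`≃_R` together with the pairs `(p ξ₁, p ξ₂)` is an `R`-bisimulation. Because the transfer clauses
require the silent chain to stay inside the class, they do not compose as stated; instead each
generating pair is shown to pass on every answer (a chain anchored anywhere in the closure,
followed by a matching step), and this property composes. A pair `(p ξ₁, p ξ₂)` answers a move
of `p` by the same move and a move of `ξ₁` through `ξ₁ ≃_R ξ₂`. The delicate case is `ξ₁ = ε` with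
`p ∈ R*`: then `p ξ₂` first runs `p` silently down to `ε`, which is possible as `R ⊆ C_G`, and it
stays in the class because all processes in the silent strongly connected component of `ε` under
`⟹_R` are `R`-bisimilar.
-/

namespace BPA

variable {C A : Type} {Γ : BPA C A} {R : Set C}

theorem nf_nil : nf R ([] : List C) = [] := by
  simp [nf]

theorem nf_eq_nil_iff {α : List C} : nf R α = [] ↔ ∀ X ∈ α, X ∈ R := by
  simp [nf, List.dropWhile_eq_nil_iff]

open Classical in
theorem nf_append_of_forall_mem {α j : List C} (hj : ∀ X ∈ j, X ∈ R) :
    nf R (α ++ j) = nf R α := by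
  have : j.reverse.dropWhile (fun X => decide (X ∈ R)) = [] :=
    List.dropWhile_eq_nil_iff.mpr fun X hX => by simpa using hj X (List.mem_reverse.mp hX)
  simp [nf, List.dropWhile_append, this]

open Classical in
theorem exists_eq_nf_append (R : Set C) (α : List C) :
    ∃ j, α = nf R α ++ j ∧ ∀ X ∈ j, X ∈ R := by
  refine ⟨(α.reverse.takeWhile fun X => decide (X ∈ R)).reverse, ?_, fun X hX => ?_⟩
  · rw [nf, ← List.reverse_append, List.takeWhile_append_dropWhile, List.reverse_reverse]
  · simpa using List.mem_takeWhile_imp (List.mem_reverse.mp hX)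

@[simp]
theorem nf_nf (α : List C) : nf R (nf R α) = nf R α := by
  obtain ⟨j, hj, hjR⟩ := exists_eq_nf_append R α
  conv_rhs => rw [hj, nf_append_of_forall_mem hjR]

theorem nf_append_nf (p α : List C) : nf R (p ++ nf R α) = nf R (p ++ α) := by
  obtain ⟨j, hj, hjR⟩ := exists_eq_nf_append R α
  conv_rhs => rw [hj, ← List.append_assoc, nf_append_of_forall_mem hjR]

theorem rEq_iff_nf_eq {α β : List C} : REq R α β ↔ nf R α = nf R β := by
  constructor
  · rintro ⟨ζ, a, b, rfl, rfl, ha, hb⟩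
    rw [nf_append_of_forall_mem ha, nf_append_of_forall_mem hb]
  · intro h
    obtain ⟨a, ha, haR⟩ := exists_eq_nf_append R α
    obtain ⟨b, hb, hbR⟩ := exists_eq_nf_append R β
    exact ⟨nf R α, a, b, ha, h ▸ hb, haR, hbR⟩

theorem Step.append_right {ℓ : A} {p q : List C} (h : Γ.Step ℓ p q) (s : List C) :
    Γ.Step ℓ (p ++ s) (q ++ s) := by
  obtain ⟨X, γ, β, hr, rfl, rfl⟩ := h
  exact ⟨X, γ, β ++ s, hr, rfl, by simp⟩

theorem TauStar.append_right {p q : List C} (h : Γ.TauStar p q) (s : List C) :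
    Γ.TauStar (p ++ s) (q ++ s) :=
  h.lift (· ++ s) fun _ _ hs => hs.append_right s

theorem Step.exists_of_append {ℓ : A} {p s q : List C} (hp : p ≠ [])
    (h : Γ.Step ℓ (p ++ s) q) : ∃ p', Γ.Step ℓ p p' ∧ q = p' ++ s := by
  obtain ⟨X, γ, β, hr, hps, rfl⟩ := h
  obtain ⟨Y, p, rfl⟩ := List.exists_cons_of_ne_nil hp
  obtain ⟨rfl, rfl⟩ := List.cons_eq_cons.mp hps
  exact ⟨γ ++ p, ⟨_, γ, p, hr, rfl, rfl⟩, by simp⟩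

/-- A step of a process whose normal form is nonempty is taken by its first constant, which
`R`-equal processes share. -/
theorem Step.exists_of_nf_eq {ℓ : A} {a a' b : List C} (h : nf R a = nf R a')
    (hne : nf R a ≠ []) (hs : Γ.Step ℓ a b) : ∃ b', Γ.Step ℓ a' b' ∧ nf R b = nf R b' := by
  obtain ⟨j, hj, hjR⟩ := exists_eq_nf_append R a
  obtain ⟨j', hj', hj'R⟩ := exists_eq_nf_append R a'
  obtain ⟨Y, s, hYs⟩ := List.exists_cons_of_ne_nil hne
  obtain ⟨X, γ, β, hr, rfl, rfl⟩ := hs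
  rw [hYs, List.cons_append, List.cons_eq_cons] at hj
  obtain ⟨rfl, rfl⟩ := hj
  rw [← h, hYs, List.cons_append] at hj'
  refine ⟨γ ++ (s ++ j'), ⟨_, γ, s ++ j', hr, hj', rfl⟩, ?_⟩
  rw [← List.append_assoc, ← List.append_assoc, nf_append_of_forall_mem hjR,
    nf_append_of_forall_mem hj'R]

theorem Ground.append {u s : List C} (hu : Γ.Ground u) (hs : Γ.Ground s) :
    Γ.Ground (u ++ s) :=
  (hu.append_right s).trans hs

theorem Ground.of_append {u s : List C} (h : Γ.Ground (u ++ s)) :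
    Γ.Ground u ∧ Γ.Ground s := by
  generalize hw : u ++ s = w at h
  induction h using ReflTransGen.head_induction_on generalizing u with
  | refl =>
    obtain ⟨rfl, rfl⟩ := List.append_eq_nil_iff.mp hw
    exact ⟨.refl, .refl⟩
  | head hstep htail ih =>
    rcases u with _ | ⟨Z, u⟩
    · rw [List.nil_append] at hw
      exact ⟨.refl, hw ▸ .head hstep htail⟩
    · obtain ⟨X, γ, β, hr, heq, rfl⟩ := hstep
      obtain ⟨rfl, rfl⟩ := List.cons_eq_cons.mp (hw.trans heq)
      have := ih (u := γ ++ u) (by simp)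
      exact ⟨.head ⟨_, γ, u, hr, rfl, rfl⟩ this.1, this.2⟩

theorem ground_of_forall_mem (hR : R ⊆ Γ.GroundC) {j : List C} (hj : ∀ X ∈ j, X ∈ R) :
    Γ.Ground j := by
  induction j with
  | nil => exact .refl
  | cons Y j ih =>
    exact Ground.append (u := [Y]) (hR (hj Y (by simp))) (ih fun X hX => hj X (by simp [hX]))

theorem ground_nf_iff (hR : R ⊆ Γ.GroundC) {α : List C} : Γ.Ground (nf R α) ↔ Γ.Ground α := by
  obtain ⟨j, hj, hjR⟩ := exists_eq_nf_append R α
  conv_rhs => rw [hj]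
  exact ⟨fun h => h.append (ground_of_forall_mem hR hjR), fun h => h.of_append.1⟩

theorem stepR_of_step {ℓ : A} {a b : List C} (h : Γ.Step ℓ a b) :
    Γ.StepR R ℓ (nf R a) (nf R b) :=
  ⟨a, b, rfl, rfl, h⟩

theorem StepR.nf_right {ℓ : A} {w w' : List C} (h : Γ.StepR R ℓ w w') : nf R w' = w' := by
  obtain ⟨_, b, -, rfl, -⟩ := h
  exact nf_nf b

theorem tauStarR_nf_of_tauStar {p q : List C} (h : Γ.TauStar p q) :
    Γ.TauStarR R (nf R p) (nf R q) :=
  h.lift (nf R) fun _ _ => stepR_of_step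

theorem tauStarR_nil_iff_ground (hR : R ⊆ Γ.GroundC) {α : List C} :
    Γ.TauStarR R (nf R α) [] ↔ Γ.Ground α := by
  refine ⟨fun h => ?_, fun h => by simpa [nf_nil] using tauStarR_nf_of_tauStar (R := R) h⟩
  rw [← ground_nf_iff hR]
  generalize nf R α = v at h
  induction h using ReflTransGen.head_induction_on with
  | refl => exact .refl
  | head hs _ ih =>
    obtain ⟨a, b, rfl, rfl, hab⟩ := hs
    exact (ground_nf_iff hR).mpr (.head hab ((ground_nf_iff hR).mp ih))

section RelChain

variable {s s' r r' : List C → List C → Prop} {a b x y z : List C}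

theorem RelChain.mono (h : RelChain s r a x y) (hr : ∀ v, r a v → r' b v) :
    RelChain s r' b x y :=
  ReflTransGen.mono (fun _ _ h => ⟨h.1, hr _ h.2⟩) _ _ h

theorem RelChain.anchor_right (h : RelChain s r a x y) (hx : r a x) : r a y := by
  induction h with
  | refl => exact hx
  | tail _ hstep _ => exact hstep.2

theorem RelChain.trans (h₁ : RelChain s r a x y) (h₂ : RelChain s r a y z) :
    RelChain s r a x z :=
  ReflTransGen.trans h₁ h₂

theorem RelChain.of_reflTransGen (f : List C → List C) (hf : ∀ u v, s u v → s' (f u) (f v))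
    (h : ReflTransGen s x y)
    (hmid : ∀ u v, ReflTransGen s x u → s u v → ReflTransGen s v y → r a (f v)) :
    RelChain s' r a (f x) (f y) := by
  induction h using ReflTransGen.head_induction_on with
  | refl => exact .refl
  | head hxc hcy ih =>
    refine .head ⟨hf _ _ hxc, hmid _ _ .refl hxc hcy⟩ (ih fun u v hcu huv hvy => ?_)
    exact hmid u v (.head hxc hcu) huv hvy

end RelChain

def NilSCC (Γ : BPA C A) (R : Set C) (v : List C) : Prop :=
  Γ.TauStarR R [] (nf R v) ∧ Γ.TauStarR R (nf R v) []

def nilSCCRel (Γ : BPA C A) (R : Set C) (x y : List C) : Prop :=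
  nf R x = nf R y ∨ (Γ.NilSCC R x ∧ Γ.NilSCC R y)

theorem isRBisim_of_relChain {r : List C → List C → Prop} (hr : Equivalence r)
    (hnf : ∀ x y, nf R x = nf R y → r x y)
    (hground : ∀ α β, r α β → Γ.Ground α → Γ.Ground β)
    (hchain : ∀ α β, r α β → RelChain (Γ.StepR R Γ.tau) r β (nf R β) (nf R α)) :
    Γ.IsRBisim R r := by
  have hr_nf (x : List C) : r x (nf R x) := hnf _ _ (nf_nf x).symm
  refine ⟨hr, fun x y h => hnf x y (rEq_iff_nf_eq.mp h), fun α β hαβ => ⟨hground α β hαβ, ?_, ?_⟩⟩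
  · intro α' hs hne
    refine ⟨_, _, hchain α β hαβ, stepR_of_step hs, fun h => hne ?_, hr_nf α'⟩
    exact hr.trans (hr_nf α) (hr.trans h (hr.symm (hr_nf α')))
  · intro ℓ _ α' hs
    exact ⟨_, _, hchain α β hαβ, stepR_of_step hs, hr_nf α'⟩

theorem isRBisim_nilSCCRel (hR : R ⊆ Γ.GroundC) : Γ.IsRBisim R (Γ.nilSCCRel R) := by
  have hnil {x y : List C} (h : nf R x = nf R y) : Γ.NilSCC R x ↔ Γ.NilSCC R y := by
    rw [NilSCC, NilSCC, h]
  refine isRBisim_of_relChain ⟨fun x => .inl rfl, ?_, ?_⟩ (fun _ _ => .inl) ?_ ?_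
  · rintro x y (h | ⟨hx, hy⟩)
    exacts [.inl h.symm, .inr ⟨hy, hx⟩]
  · rintro x y z (h | ⟨hx, hy⟩) (h' | ⟨hy', hz⟩)
    exacts [.inl (h.trans h'), .inr ⟨(hnil h).mpr hy', hz⟩, .inr ⟨hx, (hnil h').mp hy⟩,
      .inr ⟨hx, hz⟩]
  · rintro α β (h | ⟨-, -, hβ⟩) hα
    · rwa [← ground_nf_iff hR, ← h, ground_nf_iff hR]
    · exact (tauStarR_nil_iff_ground hR).mp hβ
  · rintro α β (h | ⟨hα, hβ⟩)
    · rw [h]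
      exact .refl
    · refine RelChain.of_reflTransGen id (fun _ _ h => h) (hβ.2.trans hα.1) ?_
      intro u v hu huv hv
      have hv_nf : nf R v = v := huv.nf_right
      refine .inr ⟨hβ, ?_, ?_⟩ <;> rw [id, hv_nf]
      exacts [hβ.1.trans (hu.tail huv), hv.trans hα.2]

theorem rBisim_of_nf_eq (hR : R ⊆ Γ.GroundC) {x y : List C} (h : nf R x = nf R y) :
    Γ.RBisim R x y :=
  ⟨_, isRBisim_nilSCCRel hR, .inl h⟩

theorem RBisim.symm {x y : List C} (h : Γ.RBisim R x y) : Γ.RBisim R y x :=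
  let ⟨r, hr, hxy⟩ := h
  ⟨r, hr, hr.1.symm hxy⟩

theorem RBisim.nf {x y : List C} (h : Γ.RBisim R x y) :
    Γ.RBisim R (BPA.nf R x) (BPA.nf R y) := by
  obtain ⟨r, hr, hxy⟩ := h
  have hr_nf (x : List C) : r x (BPA.nf R x) := hr.2.1 _ _ (rEq_iff_nf_eq.mpr (nf_nf x).symm)
  exact ⟨r, hr, hr.1.trans (hr.1.symm (hr_nf x)) (hr.1.trans hxy (hr_nf y))⟩

def Reply (Γ : BPA C A) (R : Set C) (T Q : List C → List C → Prop) (anchor μ : List C)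
    (ℓ : A) (α' : List C) : Prop :=
  ∃ w, RelChain (Γ.StepR R Γ.tau) T anchor μ w ∧
    ((ℓ = Γ.tau ∧ Q α' w) ∨ ∃ w', Γ.StepR R ℓ w w' ∧ Q α' w')

def IsStutterSim (Γ : BPA C A) (R : Set C) (T Q : List C → List C → Prop) : Prop :=
  ∀ anchor w z ℓ w', Q w z → T anchor z → Γ.StepR R ℓ w w' → Γ.Reply R T Q anchor z ℓ w'

/-- Unlike the transfer clauses of `IsRBisim`, this property composes along `T`. -/
def Transfers (Γ : BPA C A) (R : Set C) (T : List C → List C → Prop) (x y : List C) : Prop :=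
  (Γ.Ground x → Γ.Ground y) ∧ ∀ anchor ℓ α', T anchor x →
    Γ.Reply R T T anchor (nf R x) ℓ α' → Γ.Reply R T T anchor (nf R y) ℓ α'

section Transfers

variable {T Q Q' : List C → List C → Prop} {anchor : List C} {ℓ : A}

theorem Reply.mono {μ α' β' : List C} (h : Γ.Reply R T Q anchor μ ℓ α')
    (hQ : ∀ v, Q α' v → Q' β' v) : Γ.Reply R T Q' anchor μ ℓ β' := by
  obtain ⟨w, hc, (⟨hℓ, hw⟩ | ⟨w', hs, hw'⟩)⟩ := h
  exacts [⟨w, hc, .inl ⟨hℓ, hQ _ hw⟩⟩, ⟨w, hc, .inr ⟨w', hs, hQ _ hw'⟩⟩]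

theorem Reply.of_relChain {μ ν α' : List C} (h : Γ.Reply R T Q anchor ν ℓ α')
    (hc : RelChain (Γ.StepR R Γ.tau) T anchor μ ν) : Γ.Reply R T Q anchor μ ℓ α' :=
  let ⟨w, hc', hw⟩ := h
  ⟨w, hc.trans hc', hw⟩

theorem IsStutterSim.relChain (hsim : Γ.IsStutterSim R T Q) (hT : Equivalence T)
    (hQT : ∀ x y, Q x y → T x y) {w w₁ z : List C}
    (hc : RelChain (Γ.StepR R Γ.tau) T anchor w w₁) (hQ : Q w z) (hz : T anchor z) :
    ∃ z₁, RelChain (Γ.StepR R Γ.tau) T anchor z z₁ ∧ Q w₁ z₁ ∧ T anchor z₁ := by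
  induction hc using ReflTransGen.head_induction_on generalizing z with
  | refl => exact ⟨z, .refl, hQ, hz⟩
  | head hstep _ ih =>
    obtain ⟨zc, hzc, (⟨-, hQc⟩ | ⟨z', hs, hQ'⟩)⟩ := hsim _ _ _ _ _ hQ hz hstep.1
    · obtain ⟨z₁, hc₁, hQ₁, hz₁⟩ := ih hQc (hzc.anchor_right hz)
      exact ⟨z₁, hzc.trans hc₁, hQ₁, hz₁⟩
    · have hz' : T anchor z' := hT.trans hstep.2 (hQT _ _ hQ')
      obtain ⟨z₁, hc₁, hQ₁, hz₁⟩ := ih hQ' hz'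
      exact ⟨z₁, (hzc.tail ⟨hs, hz'⟩).trans hc₁, hQ₁, hz₁⟩

theorem IsStutterSim.reply (hsim : Γ.IsStutterSim R T Q) (hT : Equivalence T)
    (hQT : ∀ x y, Q x y → T x y) {w z α' : List C} (hQ : Q w z) (hz : T anchor z)
    (h : Γ.Reply R T T anchor w ℓ α') : Γ.Reply R T T anchor z ℓ α' := by
  obtain ⟨w₁, hc, hw₁⟩ := h
  obtain ⟨z₁, hc₁, hQ₁, hz₁⟩ := hsim.relChain hT hQT hc hQ hz
  rcases hw₁ with ⟨hℓ, hα'⟩ | ⟨w', hs, hα'⟩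
  · exact ⟨z₁, hc₁, .inl ⟨hℓ, hT.trans hα' (hQT _ _ hQ₁)⟩⟩
  · exact ((hsim _ _ _ _ _ hQ₁ hz₁ hs).mono fun _ h => hT.trans hα' (hQT _ _ h)).of_relChain hc₁

theorem IsStutterSim.transfers (hsim : Γ.IsStutterSim R T Q) (hT : Equivalence T)
    (hQT : ∀ x y, Q x y → T x y) (hnf : ∀ x, T x (nf R x)) {x y : List C} (hxy : T x y)
    (hQ : Q (nf R x) (nf R y)) (hground : Γ.Ground x → Γ.Ground y) : Γ.Transfers R T x y :=
  ⟨hground, fun _ _ _ hx => hsim.reply hT hQT hQ (hT.trans hx (hT.trans hxy (hnf y)))⟩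

theorem Transfers.refl (x : List C) : Γ.Transfers R T x x :=
  ⟨id, fun _ _ _ _ => id⟩

theorem Transfers.trans (hT : Equivalence T) {x y z : List C} (hxy : T x y)
    (h₁ : Γ.Transfers R T x y) (h₂ : Γ.Transfers R T y z) : Γ.Transfers R T x z :=
  ⟨h₂.1 ∘ h₁.1, fun _ _ _ hx => h₂.2 _ _ _ (hT.trans hx hxy) ∘ h₁.2 _ _ _ hx⟩

theorem isRBisim_of_transfers (hT : Equivalence T) (hnf : ∀ x, T x (nf R x))
    (htr : ∀ x y, T x y → Γ.Transfers R T x y) : Γ.IsRBisim R T := by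
  have hreq (x y : List C) (h : REq R x y) : T x y :=
    hT.trans (hnf x) (rEq_iff_nf_eq.mp h ▸ hT.symm (hnf y))
  have hstart (α : List C) {ℓ : A} {α' : List C} (hs : Γ.Step ℓ α α') :
      Γ.Reply R T T α (nf R α) ℓ α' :=
    ⟨_, .refl, .inr ⟨_, stepR_of_step hs, hnf α'⟩⟩
  refine ⟨hT, hreq, fun α β hαβ => ⟨(htr α β hαβ).1, ?_, ?_⟩⟩
  · intro α' hs hne
    obtain ⟨w, hc, hw⟩ := (htr α β hαβ).2 α _ α' (hT.refl α) (hstart α hs)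
    have hαw : T α w := hc.anchor_right (hT.trans hαβ (hnf β))
    have hc' := hc.mono fun _ => hT.trans (hT.symm hαβ)
    rcases hw with ⟨-, hα'⟩ | ⟨w', hs', hα'⟩
    · exact absurd (hT.trans hαw (hT.symm hα')) hne
    · exact ⟨w, w', hc', hs', fun h => hne (hT.trans hαw (hT.trans h (hT.symm hα'))), hα'⟩
  · intro ℓ hℓ α' hs
    obtain ⟨w, hc, hw⟩ := (htr α β hαβ).2 α _ α' (hT.refl α) (hstart α hs)
    rcases hw with ⟨hτ, -⟩ | ⟨w', hs', hα'⟩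
    · exact absurd hτ hℓ
    · exact ⟨w, w', hc.mono fun _ => hT.trans (hT.symm hαβ), hs', hα'⟩

theorem isStutterSim_rBisim (hT : Equivalence T) (hbis : ∀ x y, Γ.RBisim R x y → T x y) :
    Γ.IsStutterSim R T fun w z => Γ.RBisim R w z ∧ nf R z = z := by
  rintro anchor w z ℓ w' ⟨⟨r, hr, hwz⟩, hz_nf⟩ hz ⟨a, b, rfl, rfl, hab⟩
  have hr_nf (x : List C) : r x (nf R x) := hr.2.1 _ _ (rEq_iff_nf_eq.mpr (nf_nf x).symm)
  have haz : r a z := hr.1.trans (hr_nf a) hwz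
  have hanchor (v : List C) (hv : r z v) : T anchor v := hT.trans hz (hbis _ _ ⟨r, hr, hv⟩)
  by_cases hstay : ℓ = Γ.tau ∧ r a b
  · obtain ⟨rfl, hab'⟩ := hstay
    refine ⟨z, .refl, .inl ⟨rfl, ⟨r, hr, ?_⟩, hz_nf⟩⟩
    exact hr.1.trans (hr.1.symm (hr_nf b)) (hr.1.trans (hr.1.symm hab') haz)
  · obtain ⟨z'', z', hc, hs, hbz'⟩ : ∃ z'' z', RelChain (Γ.StepR R Γ.tau) r z (nf R z) z'' ∧
        Γ.StepR R ℓ z'' z' ∧ r b z' := by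
      by_cases hℓ : ℓ = Γ.tau
      · subst hℓ
        obtain ⟨z'', z', hc, hs, -, hbz'⟩ := (hr.2.2 a z haz).2.1 b hab (hstay ⟨rfl, ·⟩)
        exact ⟨z'', z', hc, hs, hbz'⟩
      · exact (hr.2.2 a z haz).2.2 ℓ hℓ b hab
    rw [hz_nf] at hc
    exact ⟨z'', hc.mono hanchor, .inr ⟨z', hs,
      ⟨r, hr, hr.1.trans (hr.1.symm (hr_nf b)) hbz'⟩, hs.nf_right⟩⟩

theorem transfers_of_rBisim (hT : Equivalence T) (hnf : ∀ x, T x (nf R x))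
    (hbis : ∀ x y, Γ.RBisim R x y → T x y) {x y : List C} (h : Γ.RBisim R x y) :
    Γ.Transfers R T x y :=
  (isStutterSim_rBisim hT hbis).transfers hT (fun _ _ h => hbis _ _ h.1) hnf (hbis _ _ h)
    ⟨h.nf, nf_nf y⟩ (let ⟨_, hr, hxy⟩ := h; (hr.2.2 _ _ hxy).1)

end Transfers

/-- Once a run of `g ++ ξa` has consumed `g`, it is answered through `ξa ≃_R ξb`. -/
def MirrorRel (Γ : BPA C A) (R : Set C) (ξa ξb w z : List C) : Prop :=
  (∃ g, w = nf R (g ++ ξa) ∧ z = nf R (g ++ ξb)) ∨ (Γ.RBisim R w z ∧ nf R z = z)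

def MirrorClosure (Γ : BPA C A) (R : Set C) (ξ₁ ξ₂ : List C) : List C → List C → Prop :=
  EqvGen fun x y => Γ.RBisim R x y ∨ ∃ p, x = p ++ ξ₁ ∧ y = p ++ ξ₂

section Mirror

variable {ξa ξb : List C} {T : List C → List C → Prop}

theorem StepR.exists_mirror {g w' : List C} {ℓ : A} (hs : Γ.StepR R ℓ (nf R (g ++ ξa)) w')
    (hg : g ≠ []) (hne : nf R (g ++ ξa) ≠ []) :
    ∃ g', w' = nf R (g' ++ ξa) ∧ Γ.StepR R ℓ (nf R (g ++ ξb)) (nf R (g' ++ ξb)) := by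
  obtain ⟨a, b, ha, rfl, hab⟩ := hs
  obtain ⟨b', hb', hbb'⟩ := Step.exists_of_nf_eq ha.symm (ha ▸ hne) hab
  obtain ⟨g', hg', rfl⟩ := Step.exists_of_append hg hb'
  exact ⟨g', hbb', stepR_of_step (hg'.append_right ξb)⟩

/-- When `g` consists of constants of `R`, it is ground and every state `v` it passes through
on its way to `ε` is in the silent component of `ε`; hence `v ++ ξb` stays equivalent to
`g ++ ξb` through the mirror pairs `(v, v ++ ξb)`. -/
theorem relChain_nf_append_of_nf_eq_nil (hR : R ⊆ Γ.GroundC) (hT : Equivalence T)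
    (hnf : ∀ x, T x (nf R x)) (hbis : ∀ x y, Γ.RBisim R x y → T x y)
    (hmir : ∀ p, T p (p ++ ξb)) {g anchor : List C} (hg : nf R g = [])
    (hz : T anchor (nf R (g ++ ξb))) :
    RelChain (Γ.StepR R Γ.tau) T anchor (nf R (g ++ ξb)) (nf R ξb) := by
  have hground : Γ.Ground g := ground_of_forall_mem hR (nf_eq_nil_iff.mp hg)
  have hanchor_g : T anchor g := hT.trans hz (hT.trans (hT.symm (hnf _)) (hT.symm (hmir g)))
  have hmid (u v : List C) (hu : Γ.TauStar g u) (huv : Γ.Step Γ.tau u v)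
      (hv : Γ.TauStar v []) : T anchor (nf R (v ++ ξb)) := by
    have hgv : Γ.nilSCCRel R g v := by
      refine .inr ⟨by simp only [NilSCC, hg]; exact ⟨.refl, .refl⟩, ?_,
        (tauStarR_nil_iff_ground hR).mpr hv⟩
      simpa [hg] using tauStarR_nf_of_tauStar (R := R) (hu.tail huv)
    exact hT.trans hanchor_g
      (hT.trans (hbis _ _ ⟨_, isRBisim_nilSCCRel hR, hgv⟩) (hT.trans (hmir v) (hnf _)))
  simpa using RelChain.of_reflTransGen (fun y => nf R (y ++ ξb))
    (fun _ _ h => stepR_of_step (h.append_right ξb)) hground hmid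

theorem isStutterSim_mirrorRel (hR : R ⊆ Γ.GroundC) (hξa : nf R ξa = ξa)
    (hξb : nf R ξb = ξb) (h : Γ.RBisim R ξa ξb) (hT : Equivalence T)
    (hnf : ∀ x, T x (nf R x)) (hbis : ∀ x y, Γ.RBisim R x y → T x y)
    (hmir : ∀ p, T (p ++ ξa) (p ++ ξb)) : Γ.IsStutterSim R T (Γ.MirrorRel R ξa ξb) := by
  have hsim := isStutterSim_rBisim hT hbis
  rintro anchor w z ℓ w' (⟨g, rfl, rfl⟩ | hQ) hz hs
  · by_cases hmove : g ≠ [] ∧ nf R (g ++ ξa) ≠ []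
    · obtain ⟨g', rfl, hs'⟩ := hs.exists_mirror hmove.1 hmove.2
      exact ⟨_, .refl, .inr ⟨_, hs', .inl ⟨g', rfl, rfl⟩⟩⟩
    obtain ⟨hw, hc⟩ : nf R (g ++ ξa) = ξa ∧
        RelChain (Γ.StepR R Γ.tau) T anchor (nf R (g ++ ξb)) ξb := by
      rcases not_and_or.mp hmove with hg | hg
      · obtain rfl : g = [] := not_not.mp hg
        simp only [List.nil_append, hξa, hξb, true_and]
        exact .refl
      · have hg := not_not.mp hg
        have hall := nf_eq_nil_iff.mp hg
        obtain rfl : ξa = [] := hξa ▸ nf_eq_nil_iff.mpr fun X hX => hall X (by simp [hX])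
        simp only [List.append_nil] at hg hmir ⊢
        have hc := relChain_nf_append_of_nf_eq_nil hR hT hnf hbis hmir hg hz
        rw [hξb] at hc
        exact ⟨hg, hc⟩
    rw [hw] at hs
    exact ((hsim _ _ _ _ _ ⟨h, hξb⟩ (hc.anchor_right hz) hs).mono fun _ => .inr).of_relChain hc
  · exact (hsim _ _ _ _ _ hQ hz hs).mono fun _ => .inr

theorem transfers_mirror (hR : R ⊆ Γ.GroundC) (hξa : nf R ξa = ξa) (hξb : nf R ξb = ξb)
    (h : Γ.RBisim R ξa ξb) (hT : Equivalence T) (hnf : ∀ x, T x (nf R x))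
    (hbis : ∀ x y, Γ.RBisim R x y → T x y) (hmir : ∀ p, T (p ++ ξa) (p ++ ξb)) (p : List C) :
    Γ.Transfers R T (p ++ ξa) (p ++ ξb) := by
  refine (isStutterSim_mirrorRel hR hξa hξb h hT hnf hbis hmir).transfers hT ?_ hnf
    (hmir p) (.inl ⟨p, rfl, rfl⟩) fun hg => ?_
  · rintro w z (⟨g, rfl, rfl⟩ | ⟨hwz, -⟩)
    exacts [hT.trans (hT.symm (hnf _)) (hT.trans (hmir g) (hnf _)), hbis _ _ hwz]
  · obtain ⟨hp, hξ⟩ := hg.of_append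
    obtain ⟨r, hr, hab⟩ := h
    exact hp.append ((hr.2.2 _ _ hab).1 hξ)

end Mirror

section MirrorClosure

variable {ξ₁ ξ₂ x y : List C}

theorem mirrorClosure_of_rBisim (h : Γ.RBisim R x y) : Γ.MirrorClosure R ξ₁ ξ₂ x y :=
  .rel _ _ (.inl h)

theorem mirrorClosure_nf (hR : R ⊆ Γ.GroundC) (x : List C) :
    Γ.MirrorClosure R ξ₁ ξ₂ x (nf R x) :=
  mirrorClosure_of_rBisim (rBisim_of_nf_eq hR (nf_nf x).symm)

theorem mirrorClosure_mirror (p : List C) : Γ.MirrorClosure R ξ₁ ξ₂ (p ++ ξ₁) (p ++ ξ₂) :=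
  .rel _ _ (.inr ⟨p, rfl, rfl⟩)

theorem transfers_mirrorClosure (hR : R ⊆ Γ.GroundC) (hξ₁ : nf R ξ₁ = ξ₁)
    (hξ₂ : nf R ξ₂ = ξ₂) (h : Γ.RBisim R ξ₁ ξ₂) (hxy : Γ.MirrorClosure R ξ₁ ξ₂ x y) :
    Γ.Transfers R (Γ.MirrorClosure R ξ₁ ξ₂) x y ∧ Γ.Transfers R (Γ.MirrorClosure R ξ₁ ξ₂) y x := by
  have hT : Equivalence (Γ.MirrorClosure R ξ₁ ξ₂) := EqvGen.is_equivalence _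
  induction hxy with
  | rel x y hxy =>
    rcases hxy with hxy | ⟨p, rfl, rfl⟩
    · exact ⟨transfers_of_rBisim hT (mirrorClosure_nf hR) (fun _ _ => mirrorClosure_of_rBisim) hxy,
        transfers_of_rBisim hT (mirrorClosure_nf hR) (fun _ _ => mirrorClosure_of_rBisim) hxy.symm⟩
    · exact ⟨transfers_mirror hR hξ₁ hξ₂ h hT (mirrorClosure_nf hR)
          (fun _ _ => mirrorClosure_of_rBisim) mirrorClosure_mirror p,
        transfers_mirror hR hξ₂ hξ₁ h.symm hT (mirrorClosure_nf hR)
          (fun _ _ => mirrorClosure_of_rBisim) (fun p => hT.symm (mirrorClosure_mirror p)) p⟩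
  | refl x => exact ⟨.refl x, .refl x⟩
  | symm x y _ ih => exact ⟨ih.2, ih.1⟩
  | trans x y z hxy hyz ih₁ ih₂ =>
    exact ⟨Transfers.trans hT hxy ih₁.1 ih₂.1, Transfers.trans hT (hT.symm hyz) ih₂.2 ih₁.2⟩

theorem isRBisim_mirrorClosure (hR : R ⊆ Γ.GroundC) (hξ₁ : nf R ξ₁ = ξ₁)
    (hξ₂ : nf R ξ₂ = ξ₂) (h : Γ.RBisim R ξ₁ ξ₂) : Γ.IsRBisim R (Γ.MirrorClosure R ξ₁ ξ₂) :=
  isRBisim_of_transfers (EqvGen.is_equivalence _) (mirrorClosure_nf hR)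
    fun _ _ hxy => (transfers_mirrorClosure hR hξ₁ hξ₂ h hxy).1

end MirrorClosure

-- With `ξ₁ = ξ₂ = []` the mirror pairs are trivial: this closure is that of `≃_R` alone.
theorem RBisim.trans (hR : R ⊆ Γ.GroundC) {x y z : List C} (h₁ : Γ.RBisim R x y)
    (h₂ : Γ.RBisim R y z) : Γ.RBisim R x z :=
  ⟨_, isRBisim_mirrorClosure (ξ₁ := []) hR nf_nil nf_nil (rBisim_of_nf_eq hR rfl),
    .trans _ _ _ (mirrorClosure_of_rBisim h₁) (mirrorClosure_of_rBisim h₂)⟩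

theorem RBisim.append_left (hR : R ⊆ Γ.GroundC) {γ δ : List C} (h : Γ.RBisim R γ δ)
    (p : List C) : Γ.RBisim R (p ++ γ) (p ++ δ) := by
  have hT : Equivalence (Γ.MirrorClosure R (BPA.nf R γ) (BPA.nf R δ)) := EqvGen.is_equivalence _
  have hprefix (α : List C) :
      Γ.MirrorClosure R (BPA.nf R γ) (BPA.nf R δ) (p ++ α) (p ++ BPA.nf R α) :=
    mirrorClosure_of_rBisim (rBisim_of_nf_eq hR (nf_append_nf p α).symm)
  exact ⟨_, isRBisim_mirrorClosure hR (nf_nf γ) (nf_nf δ) h.nf,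
    hT.trans (hprefix γ) (hT.trans (mirrorClosure_mirror p) (hT.symm (hprefix δ)))⟩

end BPA

theorem RdR_congr_general {C A : Type} (Γ : BPA C A)
    (R : Set C) (hR : R ⊆ Γ.GroundC) (γ δ : List C) (h : Γ.RBisim R γ δ) :
    Γ.RdR R γ = Γ.RdR R δ := by
  have hsub {γ δ : List C} (h : Γ.RBisim R γ δ) : Γ.RdR R γ ⊆ Γ.RdR R δ := fun X hX =>
    (((h.symm.append_left hR [X]).trans hR hX).trans hR h)
  exact (hsub h).antisymm (hsub h.symm)

/-- If `γ ≃_R δ` then `Rd_R(γ) = Rd_R(δ)`. -/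
theorem RdR_congr {C A : Type} (Γ : BPA C A) (hΓ : Γ.Normed)
    (R : Set C) (hR : R ⊆ Γ.GroundC) (γ δ : List C) (h : Γ.RBisim R γ δ) :
    Γ.RdR R γ = Γ.RdR R δ :=
  RdR_congr_general Γ R hR γ δ h
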